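/- Let V be a finite-dimensional vector space over a field k and U ⊆ V a Zariski open subset that is affine as a variety. Then the complement V \ U is either empty or of pure codimension one in V. -/

import Mathlib

/-!
STATEMENT 18: Let `V` be a finite-dimensional vector space over a field `k` (identified
with affine `n`-space `Spec k[x₁,…,xₙ]` via a choice of basis) and `U ⊆ V` a nonempty
Zariski open subset that is affine as a variety.  Then the complement `V \ U` is either
empty or of pure codimension one in `V`: every irreducible component of `V \ U` has
coheight one in the poset of irreducible closed subsets of `V`.
-/

open AlgebraicGeometry CategoryTheory TopologicalSpace

/-- A closed subset `C` of a topological space is of pure codimension one if every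
irreducible component of `C` (i.e. maximal irreducible closed subset contained in `C`)
has coheight one in the poset of irreducible closed subsets of the ambient space. -/
def PureCodimOne {X : Type} [TopologicalSpace X] (C : Set X) : Prop :=
  ∀ Z : IrreducibleCloseds X, Z.carrier ⊆ C →
    (∀ Z' : IrreducibleCloseds X, Z'.carrier ⊆ C → Z ≤ Z' → Z' = Z) →
    Order.coheight Z = 1

/-!
In a Noetherian UFD `R` every affine open `U` of `Spec R` is a basic open `D(f)`. Take for `f` a
greatest common divisor of the ideal cutting out `Spec R \ U`: then `U ⊆ D(f)`, and every prime `π`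
not dividing `f` vanishes at some point of `U`. A section over `U`, viewed in the function field,
therefore has denominators prime to every such `π`, so it lies in `R_f = Γ(D(f))` (Hartogs for
UFDs). Restriction `Γ(D(f)) → Γ(U)` is thus an isomorphism between the rings of two affine opens,
which forces `U = D(f)`. Finally, for `f ≠ 0` the components of `V(f)` are the minimal primes over
`(f)`, of height one by Krull's principal ideal theorem.
-/

theorem UniqueFactorizationMonoid.exists_dvd_pow_of_forall_prime_dvd {R : Type*}
    [CommMonoidWithZero R] [UniqueFactorizationMonoid R] {f b : R} (hb : b ≠ 0)
    (h : ∀ π : R, Prime π → π ∣ b → π ∣ f) : ∃ m : ℕ, b ∣ f ^ m := by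
  induction b using UniqueFactorizationMonoid.induction_on_prime with
  | h₁ => exact absurd rfl hb
  | h₂ u hu => exact ⟨0, hu.dvd⟩
  | h₃ c π _ hπ ih =>
    obtain ⟨m, hm⟩ := ih (right_ne_zero_of_mul hb) fun ρ hρ hρc => h ρ hρ (hρc.mul_left π)
    exact ⟨m + 1, pow_succ' f m ▸ mul_dvd_mul (h π hπ (dvd_mul_right π c)) hm⟩

theorem IsFractionRing.exists_mul_pow_eq_algebraMap_of_forall_prime {R K : Type*} [CommRing R]
    [IsDomain R] [UniqueFactorizationMonoid R] [Field K] [Algebra R K] [IsFractionRing R K]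
    {f : R} {g : K}
    (H : ∀ π : R, Prime π → ¬ π ∣ f →
      ∃ a b : R, ¬ π ∣ b ∧ g * algebraMap R K b = algebraMap R K a) :
    ∃ (a : R) (m : ℕ), g * algebraMap R K (f ^ m) = algebraMap R K a := by
  obtain ⟨a, b, hab, rfl⟩ := IsFractionRing.exists_reduced_fraction R g
  have hb : ∀ π : R, Prime π → π ∣ (b : R) → π ∣ f := by
    intro π hπ hπb
    by_contra hπf
    obtain ⟨a', b', hπb', h⟩ := H π hπ hπf
    have hcross : a * b' = a' * b := IsFractionRing.injective R K <| by
      rw [map_mul, map_mul, ← h, mul_right_comm, IsLocalization.mk'_spec]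
    have hπa : π ∣ a :=
      (hπ.dvd_or_dvd (hcross ▸ dvd_mul_of_dvd_right hπb a')).resolve_right hπb'
    exact hπ.not_isUnit (hab hπa hπb)
  obtain ⟨m, c, hc⟩ :=
    UniqueFactorizationMonoid.exists_dvd_pow_of_forall_prime_dvd (nonZeroDivisors.ne_zero b.2) hb
  refine ⟨a * c, m, ?_⟩
  rw [hc, map_mul, ← mul_assoc, IsLocalization.mk'_spec, map_mul]

theorem Ideal.exists_dvd_iff_le_span_singleton {R : Type*} [CommRing R] [IsNoetherianRing R]
    [IsGCDMonoid R] (I : Ideal R) : ∃ f : R, ∀ d : R, d ∣ f ↔ I ≤ Ideal.span {d} := by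
  obtain ⟨_⟩ : Nonempty (NormalizedGCDMonoid R) := inferInstance
  obtain ⟨s, rfl⟩ := IsNoetherian.noetherian I
  refine ⟨s.gcd id, fun d => ?_⟩
  rw [Finset.dvd_gcd_iff, Submodule.span_le]
  simp [Set.subset_def, Ideal.mem_span_singleton]

theorem AlgebraicGeometry.IsAffineOpen.eq_of_isIso_presheaf_map {X : Scheme} {U W : X.Opens}
    (hU : IsAffineOpen U) (hW : IsAffineOpen W) (hUW : U ≤ W)
    [IsIso (X.presheaf.map (homOfLE hUW).op)] : U = W := by
  refine le_antisymm hUW fun x hx => ?_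
  obtain ⟨y, rfl⟩ : x ∈ Set.range hW.fromSpec := hW.range_fromSpec ▸ hx
  obtain ⟨z, rfl⟩ := (Spec.map (X.presheaf.map (homOfLE hUW).op)).surjective y
  rw [← Scheme.Hom.comp_apply, hW.map_fromSpec hU]
  exact (hU.range_fromSpec.subset (Set.mem_range_self z) : _)

theorem AlgebraicGeometry.Scheme.isIso_presheaf_map_of_forall_germToFunctionField {X : Scheme}
    [IsIntegral X] {U W : X.Opens} (hUW : U ≤ W) [Nonempty U] [Nonempty W]
    (h : ∀ s : Γ(X, U), ∃ t : Γ(X, W), X.germToFunctionField W t = X.germToFunctionField U s) :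
    IsIso (X.presheaf.map (homOfLE hUW).op) := by
  have hcomm (t : Γ(X, W)) :
      X.germToFunctionField U (X.presheaf.map (homOfLE hUW).op t) = X.germToFunctionField W t :=
    X.presheaf.germ_res_apply (homOfLE hUW) _ _ t
  refine (ConcreteCategory.isIso_iff_bijective _).mpr ⟨fun t₁ t₂ h12 => ?_, fun s => ?_⟩
  · exact X.germToFunctionField_injective W (by rw [← hcomm, h12, hcomm])
  · obtain ⟨t, ht⟩ := h s
    exact ⟨t, X.germToFunctionField_injective U (by rw [hcomm, ht])⟩

namespace AlgebraicGeometry.Spec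

variable {R : CommRingCat} [IsDomain R]

theorem germToFunctionField_algebraMap (U : (Spec R).Opens) [Nonempty U] (r : R) :
    (Spec R).germToFunctionField U (algebraMap R Γ(Spec R, U) r) =
      algebraMap R (Spec R).functionField r := by
  simp only [IsAffineOpen.algebraMap_Spec_obj, CommRingCat.hom_comp, RingHom.coe_comp,
    Function.comp_apply, TopCat.Presheaf.germ_res_apply]
  rfl

theorem exists_germToFunctionField_eq_iff {W : (Spec R).Opens} [Nonempty W] (r : R)
    [IsLocalization.Away r Γ(Spec R, W)] (g : (Spec R).functionField) :
    (∃ t, (Spec R).germToFunctionField W t = g) ↔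
      ∃ (a : R) (m : ℕ), g * algebraMap R _ (r ^ m) = algebraMap R _ a := by
  constructor
  · rintro ⟨t, rfl⟩
    obtain ⟨⟨a, _, m, rfl⟩, h⟩ := IsLocalization.surj (Submonoid.powers r) t
    refine ⟨a, m, ?_⟩
    simpa only [map_mul, germToFunctionField_algebraMap] using
      congrArg ((Spec R).germToFunctionField W) h
  · rintro ⟨a, m, h⟩
    have hunit : IsUnit (algebraMap R (Spec R).functionField (r ^ m)) := by
      rw [← germToFunctionField_algebraMap W, map_pow]
      exact ((IsLocalization.Away.algebraMap_isUnit (S := Γ(Spec R, W)) r).pow m).map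
        ((Spec R).germToFunctionField W).hom
    refine ⟨IsLocalization.mk' _ a (⟨r ^ m, m, rfl⟩ : Submonoid.powers r),
      hunit.mul_right_cancel ?_⟩
    rw [h, ← germToFunctionField_algebraMap W, ← map_mul, IsLocalization.mk'_spec,
      germToFunctionField_algebraMap]

theorem exists_germToFunctionField_mul_eq {U : (Spec R).Opens} [Nonempty U] (s : Γ(Spec R, U))
    {x : PrimeSpectrum R} (hx : x ∈ U) :
    ∃ a b : R, b ∉ x.asIdeal ∧
      (Spec R).germToFunctionField U s * algebraMap R _ b = algebraMap R _ a := by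
  obtain ⟨_, ⟨r, rfl⟩, hxr, hrU⟩ :=
    PrimeSpectrum.isTopologicalBasis_basic_opens.exists_subset_of_mem_open hx U.isOpen
  -- `PrimeSpectrum.basicOpen r` is typed as an open of `PrimeSpectrum R`, not of the scheme
  -- `Spec R`; instances on `Γ(Spec R, -)` are only found once it is renamed as a `(Spec R).Opens`.
  obtain ⟨W, hW⟩ : ∃ W : (Spec R).Opens, W = PrimeSpectrum.basicOpen r := ⟨_, rfl⟩
  have hWU : W ≤ U := hW ▸ hrU
  have : Nonempty W := ⟨⟨x, hW ▸ hxr⟩⟩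
  have : IsLocalization.Away r Γ(Spec R, W) := by subst hW; infer_instance
  obtain ⟨a, m, h⟩ := (exists_germToFunctionField_eq_iff r _).mp
    ⟨(Spec R).presheaf.map (homOfLE hWU).op s, (Spec R).presheaf.germ_res_apply (homOfLE hWU) _ _ s⟩
  exact ⟨a, r ^ m, fun hrm => hxr (x.isPrime.mem_of_pow_mem m hrm), h⟩

end AlgebraicGeometry.Spec

theorem AlgebraicGeometry.IsAffineOpen.exists_eq_basicOpen {R : CommRingCat} [IsDomain R]
    [UniqueFactorizationMonoid R] [IsNoetherianRing R] {U : (Spec R).Opens}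
    (hU : IsAffineOpen U) : ∃ f : R, U = PrimeSpectrum.basicOpen f := by
  rcases isEmpty_or_nonempty U with hU0 | hU0
  · refine ⟨0, ?_⟩
    rw [PrimeSpectrum.basicOpen_zero]
    exact eq_bot_iff.mpr fun x hx => hU0.false ⟨x, hx⟩
  obtain ⟨I, hI⟩ := (PrimeSpectrum.isClosed_iff_zeroLocus_ideal _).mp U.isOpen.isClosed_compl
  obtain ⟨f, hf⟩ := I.exists_dvd_iff_le_span_singleton
  have hprime (π : R) (hπ : Prime π) (hπf : ¬ π ∣ f) : ∃ x ∈ U, π ∈ x.asIdeal := by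
    refine ⟨⟨_, (Ideal.span_singleton_prime hπ.ne_zero).mpr hπ⟩, ?_,
      Ideal.mem_span_singleton_self π⟩
    by_contra hx
    exact hπf ((hf π).mpr (by simpa using hI.subset hx))
  obtain ⟨W, hW⟩ : ∃ W : (Spec R).Opens, W = PrimeSpectrum.basicOpen f := ⟨_, rfl⟩
  have hUW : U ≤ W := by
    intro x hxU
    rw [hW]
    change f ∉ x.asIdeal
    intro hfx
    have hxI : x ∈ PrimeSpectrum.zeroLocus I :=
      ((hf f).mp dvd_rfl).trans ((Ideal.span_singleton_le_iff_mem _).mpr hfx)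
    exact hI.symm.subset hxI hxU
  have : Nonempty W := ⟨⟨_, hUW hU0.some.2⟩⟩
  have : IsLocalization.Away f Γ(Spec R, W) := by subst hW; infer_instance
  have := Scheme.isIso_presheaf_map_of_forall_germToFunctionField hUW fun s => by
    refine (Spec.exists_germToFunctionField_eq_iff f _).mpr
      (IsFractionRing.exists_mul_pow_eq_algebraMap_of_forall_prime fun π hπ hπf => ?_)
    obtain ⟨x, hxU, hπx⟩ := hprime π hπ hπf
    obtain ⟨a, b, hbx, h⟩ := Spec.exists_germToFunctionField_mul_eq s hxU
    exact ⟨a, b, fun hπb => hbx (x.asIdeal.mem_of_dvd hπb hπx), h⟩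
  exact ⟨f, hW ▸ hU.eq_of_isIso_presheaf_map (hW ▸ IsAffineOpen.Spec_basicOpen f) hUW⟩

namespace PrimeSpectrum

theorem exists_mem_minimalPrimes_coheight_eq {R : Type*} [CommRing R] (s : Set R)
    (Z : IrreducibleCloseds (PrimeSpectrum R)) (hZ : Z.carrier ⊆ zeroLocus s)
    (hmax : ∀ Z' : IrreducibleCloseds (PrimeSpectrum R),
      Z'.carrier ⊆ zeroLocus s → Z ≤ Z' → Z' = Z) :
    ∃ p ∈ (Ideal.span s).minimalPrimes, Order.coheight Z = p.height := by
  let e := PrimeSpectrum.pointsEquivIrreducibleCloseds R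
  obtain ⟨p, rfl⟩ : ∃ p, OrderDual.ofDual (e p) = Z := ⟨e.symm (OrderDual.toDual Z), by simp⟩
  have hsub (q : PrimeSpectrum R) :
      (OrderDual.ofDual (e q)).carrier ⊆ zeroLocus s ↔ Ideal.span s ≤ q.asIdeal := by
    change closure {q} ⊆ _ ↔ _
    rw [(isClosed_zeroLocus s).closure_subset_iff, Set.singleton_subset_iff, mem_zeroLocus,
      Ideal.span_le]
  refine ⟨p.asIdeal, ⟨⟨p.isPrime, (hsub p).mp hZ⟩, fun q ⟨hq, hsq⟩ hqp => ?_⟩, ?_⟩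
  · let q' : PrimeSpectrum R := ⟨q, hq⟩
    have hq' : q' = p :=
      e.injective (hmax _ ((hsub q').mpr hsq) (e.monotone (show q' ≤ p from hqp)))
    exact hq' ▸ le_rfl
  · rw [height_eq_orderHeight, ← Order.height_orderIso e p]
    rfl

theorem pureCodimOne_compl_basicOpen {R : Type} [CommRing R] [IsDomain R] [IsNoetherianRing R]
    {f : R} (hf : f ≠ 0) : PureCodimOne (basicOpen f : Set (PrimeSpectrum R))ᶜ := by
  rw [basicOpen_eq_zeroLocus_compl, compl_compl]
  intro Z hZ hmax
  obtain ⟨p, hp, hZp⟩ := exists_mem_minimalPrimes_coheight_eq {f} Z hZ hmax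
  have := hp.isPrime
  have hp0 : p ≠ ⊥ := fun h => hf <| by simpa [h] using hp.le (Ideal.mem_span_singleton_self f)
  rw [hZp]
  exact le_antisymm (Ideal.height_le_one_of_isPrincipal_of_mem_minimalPrimes _ p hp)
    (Order.one_le_iff_ne_zero.mpr (Ideal.height_eq_zero_iff_eq_bot.not.mpr hp0))

end PrimeSpectrum

theorem complement_of_affine_open_pure_codim_one
    (k : Type) [Field k] (n : ℕ)
    (U : (Spec (CommRingCat.of (MvPolynomial (Fin n) k))).Opens)
    (hne : (U : Set (Spec (CommRingCat.of (MvPolynomial (Fin n) k)))).Nonempty)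
    (haff : IsAffineOpen U) :
    (↑U : Set (Spec (CommRingCat.of (MvPolynomial (Fin n) k))))ᶜ = ∅ ∨
      PureCodimOne (↑U : Set (Spec (CommRingCat.of (MvPolynomial (Fin n) k))))ᶜ := by
  obtain ⟨f, rfl⟩ := haff.exists_eq_basicOpen
  obtain ⟨x, hx⟩ := hne
  have hf : f ≠ 0 := fun h0 => (show f ∉ x.asIdeal from hx) (h0 ▸ x.asIdeal.zero_mem)
  exact Or.inr (PrimeSpectrum.pureCodimOne_compl_basicOpen hf)
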